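/- Let n be an even positive integer and F : 𝔽_2^n → 𝔽_2^n a plateaued APN function whose image has size |im(F)| = (2^n + 2)/3. Then no nonzero component of F is balanced, i.e., W_F(b,0) ≠ 0 for every b ∈ 𝔽_2^n with b ≠ 0. -/

import Mathlib

open Finset

/-- The integer-valued Walsh transform of `F : 𝔽_2^n → 𝔽_2^n`:
`W_F(b,a) = ∑_x (-1)^{⟨b,F(x)⟩ + ⟨a,x⟩}`. -/
def walshB (n : ℕ) (F : (Fin n → ZMod 2) → (Fin n → ZMod 2))
    (b a : Fin n → ZMod 2) : ℤ :=
  ∑ x : Fin n → ZMod 2, (-1 : ℤ) ^ ((∑ i, b i * F x i).val + (∑ i, a i * x i).val)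

/-- The imbalance `Nb_F = 2^{-n} ∑_{b ≠ 0} W_F(b,0)²`. -/
noncomputable def NbB (n : ℕ) (F : (Fin n → ZMod 2) → (Fin n → ZMod 2)) : ℝ :=
  ((2 : ℝ) ^ n)⁻¹ *
    ∑ b ∈ univ.filter (fun b : Fin n → ZMod 2 => b ≠ 0), ((walshB n F b 0 : ℝ)) ^ 2

/-- `F` is APN: for every `a ≠ 0` and every `b`, the equation `F(x+a) + F(x) = b` has at
most 2 solutions. -/
def IsAPNB (n : ℕ) (F : (Fin n → ZMod 2) → (Fin n → ZMod 2)) : Prop :=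
  ∀ a : Fin n → ZMod 2, a ≠ 0 → ∀ b : Fin n → ZMod 2,
    (univ.filter fun x => F (x + a) + F x = b).card ≤ 2

/-- The component `F_b` is `t`-plateaued: `|W_F(b,a)| ∈ {0, 2^{(n+t)/2}}` for all `a`,
expressed via squares of the integer Walsh coefficients. -/
def IsTPlateauedB (n : ℕ) (F : (Fin n → ZMod 2) → (Fin n → ZMod 2))
    (b : Fin n → ZMod 2) (t : ℕ) : Prop :=
  ∀ a : Fin n → ZMod 2, walshB n F b a = 0 ∨ (walshB n F b a) ^ 2 = 2 ^ (n + t)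

/-- `F` is plateaued: every nonzero component is `t_b`-plateaued for some `t_b`. -/
def IsPlateauedB (n : ℕ) (F : (Fin n → ZMod 2) → (Fin n → ZMod 2)) : Prop :=
  ∀ b : Fin n → ZMod 2, b ≠ 0 → ∃ t : ℕ, IsTPlateauedB n F b t

/-- The component `F_b` is bent: `|W_F(b,a)| = 2^{n/2}` for all `a`, i.e.
`W_F(b,a)² = 2^n`. -/
def IsBentB (n : ℕ) (F : (Fin n → ZMod 2) → (Fin n → ZMod 2))
    (b : Fin n → ZMod 2) : Prop :=
  ∀ a : Fin n → ZMod 2, (walshB n F b a) ^ 2 = 2 ^ n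

instance (n : ℕ) (F : (Fin n → ZMod 2) → (Fin n → ZMod 2)) (b : Fin n → ZMod 2) :
    Decidable (IsBentB n F b) := by
  unfold IsBentB; infer_instance

/-!
Write `P = 2^n`, let `N` be the number of pairs `(x, y)` with `F x = F y`, and let `E` be
the number of quadruples `(x, y, z, w)` with `x + y = z + w` and `F x + F y = F z + F w`.
Orthogonality of the characters `b ↦ (-1)^⟨b, u⟩` gives `∑_b W_F(b,0)² = P·N` and
`∑_{b,a} W_F(b,a)⁴ = P²·E`. Fibre sizes `m` of `F` satisfy `m² ≥ 5m - 6`, so an image of size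
`(P + 2)/3` forces `N ≥ 3P - 4`, while APN-ness bounds `E ≤ P(3P - 2)`.

A `t`-plateaued component satisfies `∑_a W_F(b,a)⁴ = 2^{n+t}·P² ≥ P²·W_F(b,0)²`. If it is balanced,
then `t ≥ 2`: `n + t` is even because `2^{n+t}` is a square, and `t = 0` would force
`W_F(b,a)² = P` for every `a` by Parseval. This gains an extra `4P·P²`, so summing over `b` gives
`P·N + 4P ≤ E`, which together with the two bounds reads `3P² ≤ 3P² - 2P`.
-/

def signChar : AddChar (ZMod 2) ℤ where
  toFun v := (-1) ^ v.val
  map_zero_eq_one' := rfl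
  map_add_eq_mul' := by decide

lemma signChar_eq_one_iff {v : ZMod 2} : signChar v = 1 ↔ v = 0 := by
  revert v; decide

lemma signChar_mul_self (v : ZMod 2) : signChar v * signChar v = 1 := by
  revert v; decide

section Orthogonality

variable {ι : Type*} [Fintype ι] [DecidableEq ι]

lemma sum_signChar_dotProduct (u : ι → ZMod 2) :
    ∑ b : ι → ZMod 2, signChar (b ⬝ᵥ u) = if u = 0 then 2 ^ Fintype.card ι else 0 := by
  let ψ : AddChar (ι → ZMod 2) ℤ := signChar.compAddMonoidHom
    { toFun := (· ⬝ᵥ u), map_zero' := zero_dotProduct u, map_add' := (add_dotProduct · · u) }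
  have hψ : ψ = 0 ↔ u = 0 := by
    refine AddChar.eq_zero_iff.trans ⟨fun h => funext fun i => ?_, fun h b => ?_⟩
    · simpa [ψ, signChar_eq_one_iff] using h (Pi.single i 1)
    · simp [ψ, h]
  exact ψ.sum_eq_ite.trans (by simp [hψ])

lemma sum_signChar_mul_signChar (u v : ι → ZMod 2) :
    ∑ b : ι → ZMod 2, signChar (b ⬝ᵥ u) * signChar (b ⬝ᵥ v)
      = if u = v then 2 ^ Fintype.card ι else 0 := by
  simp_rw [← AddChar.map_add_eq_mul, ← dotProduct_add, sum_signChar_dotProduct,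
    ← ZModModule.sub_eq_add, sub_eq_zero]

theorem sum_sq_sum_mul_signChar {X : Type*} [Fintype X] (f : X → ℤ) (g : X → ι → ZMod 2) :
    ∑ c : ι → ZMod 2, (∑ x, f x * signChar (c ⬝ᵥ g x)) ^ 2
      = 2 ^ Fintype.card ι * ∑ x, ∑ y, if g x = g y then f x * f y else 0 := by
  simp_rw [sq, Finset.sum_mul_sum, Finset.mul_sum]
  rw [Finset.sum_comm]
  refine Finset.sum_congr rfl fun x _ => ?_
  rw [Finset.sum_comm]
  refine Finset.sum_congr rfl fun y _ => ?_
  calc ∑ c : ι → ZMod 2, f x * signChar (c ⬝ᵥ g x) * (f y * signChar (c ⬝ᵥ g y))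
      = f x * f y * ∑ c : ι → ZMod 2, signChar (c ⬝ᵥ g x) * signChar (c ⬝ᵥ g y) := by
        rw [Finset.mul_sum]; exact Finset.sum_congr rfl fun c _ => by ring
    _ = _ := by rw [sum_signChar_mul_signChar]; split_ifs <;> ring

end Orthogonality

def collisionCount {α β : Type*} [Fintype α] [DecidableEq β] (f : α → β) : ℤ :=
  ∑ x, ∑ y, if f x = f y then 1 else 0

theorem le_collisionCount {α β : Type*} [Fintype α] [DecidableEq β] (f : α → β) (a : ℤ) :
    (2 * a + 1) * Fintype.card α - a * (a + 1) * #(univ.image f) ≤ collisionCount f := by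
  set m : β → ℤ := fun c => #{x | f x = c}
  have hcard : ∑ c ∈ univ.image f, m c = Fintype.card α := by
    simp only [m]; exact_mod_cast (card_eq_sum_card_image f univ).symm
  have hcoll : collisionCount f = ∑ c ∈ univ.image f, m c ^ 2 := by
    have hfiber (x : α) : ∑ y, (if f x = f y then 1 else 0 : ℤ) = m (f x) := by
      simp only [m, Finset.sum_boole, eq_comm (a := f x)]
    rw [collisionCount, Fintype.sum_congr _ _ hfiber, Finset.sum_comp m f]
    simp [m, sq]
  calc (2 * a + 1) * Fintype.card α - a * (a + 1) * #(univ.image f)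
      = ∑ c ∈ univ.image f, ((2 * a + 1) * m c - a * (a + 1)) := by
        rw [Finset.sum_sub_distrib, ← Finset.mul_sum, hcard, Finset.sum_const, nsmul_eq_mul]
        ring
    _ ≤ collisionCount f := by
        rw [hcoll]
        refine Finset.sum_le_sum fun c _ => ?_
        rcases le_or_gt (m c) a with h | h <;> nlinarith

theorem Nat.Prime.even_of_sq_eq_pow {p w k : ℕ} (hp : p.Prime) (h : w ^ 2 = p ^ k) : Even k := by
  have := congrArg (fun m => m.factorization p) h
  simp [Nat.factorization_pow, hp.factorization_self] at this
  exact ⟨_, this ▸ two_mul _⟩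

theorem three_dvd_two_pow_add_two {n : ℕ} (hn : Even n) : 3 ∣ 2 ^ n + 2 := by
  obtain ⟨m, rfl⟩ := hn
  rw [← two_mul, pow_mul, Nat.dvd_iff_mod_eq_zero, Nat.add_mod, Nat.pow_mod]
  norm_num

def graphEnergy {n : ℕ} (F : (Fin n → ZMod 2) → (Fin n → ZMod 2)) : ℤ :=
  ∑ p : (Fin n → ZMod 2) × (Fin n → ZMod 2), ∑ q : (Fin n → ZMod 2) × (Fin n → ZMod 2),
    if p.1 + p.2 = q.1 + q.2 ∧ F p.1 + F p.2 = F q.1 + F q.2 then 1 else 0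

section Walsh

variable {n : ℕ} (F : (Fin n → ZMod 2) → (Fin n → ZMod 2))

lemma walshB_eq_sum (b a : Fin n → ZMod 2) :
    walshB n F b a = ∑ x, signChar (b ⬝ᵥ F x) * signChar (a ⬝ᵥ x) :=
  Finset.sum_congr rfl fun _ _ => pow_add _ _ _

lemma walshB_zero_right (b : Fin n → ZMod 2) : walshB n F b 0 = ∑ x, signChar (b ⬝ᵥ F x) := by
  simp [walshB_eq_sum]

lemma walshB_zero_left (a : Fin n → ZMod 2) : walshB n F 0 a = if a = 0 then 2 ^ n else 0 := by
  simp [walshB_eq_sum, dotProduct_comm a, sum_signChar_dotProduct]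

lemma sum_walshB_sq (b : Fin n → ZMod 2) : ∑ a, walshB n F b a ^ 2 = 2 ^ n * 2 ^ n := by
  simp_rw [walshB_eq_sum]
  simpa [Finset.sum_ite_eq, signChar_mul_self] using
    sum_sq_sum_mul_signChar (fun x => signChar (b ⬝ᵥ F x)) id

lemma exists_walshB_ne_zero (b : Fin n → ZMod 2) : ∃ a, walshB n F b a ≠ 0 := by
  by_contra! h
  simpa [h] using sum_walshB_sq F b

lemma isTPlateauedB_zero : IsTPlateauedB n F 0 n := by
  intro a
  rw [walshB_zero_left]
  split_ifs
  · exact Or.inr (by ring)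
  · exact Or.inl rfl

lemma sum_walshB_zero_sq : ∑ b, walshB n F b 0 ^ 2 = 2 ^ n * collisionCount F := by
  simp_rw [walshB_zero_right]
  simpa [collisionCount] using sum_sq_sum_mul_signChar (fun _ => (1 : ℤ)) F

lemma walshB_sq_eq_sum (b a : Fin n → ZMod 2) :
    walshB n F b a ^ 2 = ∑ p : (Fin n → ZMod 2) × (Fin n → ZMod 2),
      signChar (b ⬝ᵥ (F p.1 + F p.2)) * signChar (a ⬝ᵥ (p.1 + p.2)) := by
  rw [walshB_eq_sum, sq, Finset.sum_mul_sum, Fintype.sum_prod_type]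
  refine Finset.sum_congr rfl fun x _ => Finset.sum_congr rfl fun y _ => ?_
  simp only [dotProduct_add, AddChar.map_add_eq_mul]
  ring

lemma sum_walshB_pow_four_eq_sum_pairs (b : Fin n → ZMod 2) :
    ∑ a, walshB n F b a ^ 4 = 2 ^ n * ∑ p : (Fin n → ZMod 2) × (Fin n → ZMod 2),
      ∑ q : (Fin n → ZMod 2) × (Fin n → ZMod 2), if p.1 + p.2 = q.1 + q.2 then
        signChar (b ⬝ᵥ (F p.1 + F p.2)) * signChar (b ⬝ᵥ (F q.1 + F q.2)) else 0 := by
  simp_rw [show ∀ w : ℤ, w ^ 4 = (w ^ 2) ^ 2 by intro; ring, walshB_sq_eq_sum]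
  simpa using sum_sq_sum_mul_signChar (fun p : (Fin n → ZMod 2) × (Fin n → ZMod 2) =>
    signChar (b ⬝ᵥ (F p.1 + F p.2))) (fun p => p.1 + p.2)

lemma sum_sum_walshB_pow_four :
    ∑ b, ∑ a, walshB n F b a ^ 4 = 2 ^ n * 2 ^ n * graphEnergy F := by
  have hpair (p q : (Fin n → ZMod 2) × (Fin n → ZMod 2)) :
      ∑ b : Fin n → ZMod 2, (if p.1 + p.2 = q.1 + q.2 then
        signChar (b ⬝ᵥ (F p.1 + F p.2)) * signChar (b ⬝ᵥ (F q.1 + F q.2)) else 0)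
      = 2 ^ n * if p.1 + p.2 = q.1 + q.2 ∧ F p.1 + F p.2 = F q.1 + F q.2 then 1 else 0 := by
    by_cases h : p.1 + p.2 = q.1 + q.2
    · simp only [h, true_and, if_true, sum_signChar_mul_signChar, Fintype.card_fin, mul_ite,
        mul_one, mul_zero]
    · simp [h]
  simp_rw [sum_walshB_pow_four_eq_sum_pairs, ← Finset.mul_sum]
  rw [Finset.sum_comm]
  simp_rw [Finset.sum_comm (γ := Fin n → ZMod 2), hpair, ← Finset.mul_sum, graphEnergy]
  ring

lemma sum_graph_solutions_eq_card (x u : Fin n → ZMod 2) :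
    ∑ q : (Fin n → ZMod 2) × (Fin n → ZMod 2),
      (if x + (x + u) = q.1 + q.2 ∧ F x + F (x + u) = F q.1 + F q.2 then 1 else 0 : ℤ)
      = #{z | F (z + u) + F z = F x + F (x + u)} := by
  rw [Fintype.sum_prod_type, Finset.natCast_card_filter]
  refine Finset.sum_congr rfl fun z _ => ?_
  have hw (w : Fin n → ZMod 2) : x + (x + u) = z + w ↔ w = z + u := by
    rw [← add_assoc, ZModModule.add_self, zero_add, eq_comm, ← eq_sub_iff_add_eq',
      ZModModule.sub_eq_add, add_comm u]
  simp only [hw, ite_and, Finset.sum_ite_eq', Finset.mem_univ, if_true]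
  exact if_congr (by rw [eq_comm, add_comm (F z)]) rfl rfl

end Walsh

section

variable {n : ℕ} {F : (Fin n → ZMod 2) → (Fin n → ZMod 2)}

theorem IsAPNB.graphEnergy_le (hapn : IsAPNB n F) : graphEnergy F ≤ 2 ^ n * (3 * 2 ^ n - 2) :=
  calc graphEnergy F = ∑ x, ∑ u, (#{z | F (z + u) + F z = F x + F (x + u)} : ℤ) := by
        rw [graphEnergy, Fintype.sum_prod_type]
        refine Finset.sum_congr rfl fun x _ => ?_
        rw [← Equiv.sum_comp (Equiv.addLeft x)]
        exact Finset.sum_congr rfl fun u _ => sum_graph_solutions_eq_card F x u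
    _ ≤ ∑ x : Fin n → ZMod 2, ∑ u : Fin n → ZMod 2, if u = 0 then (2 : ℤ) ^ n else 2 := by
        refine Finset.sum_le_sum fun x _ => Finset.sum_le_sum fun u _ => ?_
        split_ifs with hu
        · exact_mod_cast (Finset.card_filter_le _ _).trans (by simp)
        · exact_mod_cast hapn u hu _
    _ = 2 ^ n * (3 * 2 ^ n - 2) := by
        have h (u : Fin n → ZMod 2) :
            (if u = 0 then (2 : ℤ) ^ n else 2) = 2 + if u = 0 then 2 ^ n - 2 else 0 := by
          split_ifs <;> ring
        simp [h, Finset.sum_add_distrib]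
        ring

namespace IsTPlateauedB

variable {b : Fin n → ZMod 2} {t : ℕ}

lemma walshB_sq_le (h : IsTPlateauedB n F b t) (a : Fin n → ZMod 2) :
    walshB n F b a ^ 2 ≤ 2 ^ (n + t) := by
  rcases h a with h0 | h2
  · rw [h0]; positivity
  · exact h2.le

lemma sum_walshB_pow_four (h : IsTPlateauedB n F b t) :
    ∑ a, walshB n F b a ^ 4 = 2 ^ (n + t) * (2 ^ n * 2 ^ n) := by
  rw [← sum_walshB_sq F b, Finset.mul_sum]
  refine Finset.sum_congr rfl fun a _ => ?_
  rcases h a with h0 | h2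
  · simp [h0]
  · rw [show walshB n F b a ^ 4 = (walshB n F b a ^ 2) ^ 2 by ring, h2, sq]

lemma even_add (h : IsTPlateauedB n F b t) : Even (n + t) := by
  obtain ⟨a, ha⟩ := exists_walshB_ne_zero F b
  refine Nat.prime_two.even_of_sq_eq_pow (w := (walshB n F b a).natAbs) ?_
  zify
  simpa using (h a).resolve_left ha

lemma ne_zero_of_walshB_zero (h : IsTPlateauedB n F b t) (h0 : walshB n F b 0 = 0) : t ≠ 0 := by
  rintro rfl
  have hlt : ∑ a, walshB n F b a ^ 2 < ∑ _a : Fin n → ZMod 2, (2 : ℤ) ^ n :=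
    Finset.sum_lt_sum (fun a _ => by simpa using h.walshB_sq_le a)
      ⟨0, Finset.mem_univ _, by rw [h0]; positivity⟩
  simp [sum_walshB_sq] at hlt

lemma two_le (h : IsTPlateauedB n F b t) (hn : Even n) (h0 : walshB n F b 0 = 0) : 2 ≤ t := by
  have ht := h.ne_zero_of_walshB_zero h0
  obtain ⟨k, hk⟩ := hn
  obtain ⟨l, hl⟩ := h.even_add
  omega

lemma sq_mul_walshB_sq_le (h : IsTPlateauedB n F b t) (a : Fin n → ZMod 2) :
    2 ^ n * 2 ^ n * walshB n F b a ^ 2 ≤ ∑ a', walshB n F b a' ^ 4 := by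
  rw [h.sum_walshB_pow_four, mul_comm]
  exact mul_le_mul_of_nonneg_right (h.walshB_sq_le a) (by positivity)

lemma sq_mul_four_mul_le (h : IsTPlateauedB n F b t) (hn : Even n) (h0 : walshB n F b 0 = 0) :
    2 ^ n * 2 ^ n * (4 * 2 ^ n) ≤ ∑ a, walshB n F b a ^ 4 := by
  rw [h.sum_walshB_pow_four, mul_comm]
  gcongr
  calc (4 : ℤ) * 2 ^ n = 2 ^ (n + 2) := by ring
    _ ≤ 2 ^ (n + t) := pow_le_pow_right₀ (by norm_num) (by linarith [h.two_le hn h0])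

end IsTPlateauedB

theorem sq_mul_sum_walshB_zero_sq_add_le (hplat : IsPlateauedB n F) (hn : Even n)
    {b₀ : Fin n → ZMod 2} (hbal : walshB n F b₀ 0 = 0) :
    2 ^ n * 2 ^ n * (∑ b, walshB n F b 0 ^ 2 + 4 * 2 ^ n) ≤ ∑ b, ∑ a, walshB n F b a ^ 4 := by
  have hplat' (b : Fin n → ZMod 2) : ∃ t, IsTPlateauedB n F b t := by
    by_cases hb : b = 0
    · exact ⟨n, hb ▸ isTPlateauedB_zero F⟩
    · exact hplat b hb
  calc 2 ^ n * 2 ^ n * (∑ b, walshB n F b 0 ^ 2 + 4 * 2 ^ n)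
      = ∑ b, (2 ^ n * 2 ^ n * walshB n F b 0 ^ 2
          + if b = b₀ then 2 ^ n * 2 ^ n * (4 * 2 ^ n) else 0) := by
        rw [Finset.sum_add_distrib, Finset.sum_ite_eq', if_pos (Finset.mem_univ _), mul_add,
          Finset.mul_sum]
    _ ≤ ∑ b, ∑ a, walshB n F b a ^ 4 := by
        refine Finset.sum_le_sum fun b _ => ?_
        obtain ⟨t, ht⟩ := hplat' b
        split_ifs with hb
        · subst hb
          simpa [hbal] using ht.sq_mul_four_mul_le hn hbal
        · simpa using ht.sq_mul_walshB_sq_le 0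

end

theorem plateaued_apn_min_image_no_balanced_general (n : ℕ) (hne : Even n)
    (F : (Fin n → ZMod 2) → (Fin n → ZMod 2))
    (hplat : IsPlateauedB n F) (hapn : IsAPNB n F)
    (himg : (univ.image F).card = (2 ^ n + 2) / 3) :
    ∀ b : Fin n → ZMod 2, b ≠ 0 → walshB n F b 0 ≠ 0 := by
  intro b _ hbal
  have hP : (0 : ℤ) < 2 ^ n := by positivity
  have himg3 : (3 : ℤ) * (univ.image F).card = 2 ^ n + 2 := by
    rw [himg]; exact_mod_cast Nat.mul_div_cancel' (three_dvd_two_pow_add_two hne)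
  have hcoll : 3 * 2 ^ n - 4 ≤ collisionCount F := by
    have := le_collisionCount F 2
    simp only [Fintype.card_fun, ZMod.card, Fintype.card_fin] at this
    push_cast at this
    linarith
  have hmoment := sq_mul_sum_walshB_zero_sq_add_le hplat hne hbal
  rw [sum_walshB_zero_sq, sum_sum_walshB_pow_four] at hmoment
  have hmoment' := le_of_mul_le_mul_left hmoment (by positivity)
  nlinarith [hapn.graphEnergy_le, mul_le_mul_of_nonneg_left hcoll hP.le]

theorem plateaued_apn_min_image_no_balanced (n : ℕ) (hn : 0 < n) (hne : Even n)
    (F : (Fin n → ZMod 2) → (Fin n → ZMod 2))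
    (hplat : IsPlateauedB n F) (hapn : IsAPNB n F)
    (himg : (univ.image F).card = (2 ^ n + 2) / 3) :
    ∀ b : Fin n → ZMod 2, b ≠ 0 → walshB n F b 0 ≠ 0 :=
  plateaued_apn_min_image_no_balanced_general n hne F hplat hapn himg
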